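/- Let T be a tree with diameter at least 5, and let S be a proper convex set of the complementary prism TT̄ with M = S ∩ V(T). If M contains two vertices u, v with d_T(u,v) > 3, then every pair of vertices x, y ∈ M satisfies d_T(x,y) > 3. -/

import Mathlib

open SimpleGraph

/-- Adjacency of the complementary prism: copies of `G` and `Gᶜ` joined by a perfect matching. -/
def prismAdj {V : Type*} (G : SimpleGraph V) : V ⊕ V → V ⊕ V → Prop
  | Sum.inl a, Sum.inl b => G.Adj a b
  | Sum.inr a, Sum.inr b => Gᶜ.Adj a b
  | Sum.inl a, Sum.inr b => a = b
  | Sum.inr a, Sum.inl b => a = b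

/-- The complementary prism `G G̅` of a graph `G`. -/
def compPrism {V : Type*} (G : SimpleGraph V) : SimpleGraph (V ⊕ V) where
  Adj := prismAdj G
  symm := by
    constructor
    rintro (a | a) (b | b) h
    · exact h.symm
    · exact h.symm
    · exact h.symm
    · exact h.symm
  loopless := by
    constructor
    rintro (a | a) h
    · exact G.loopless.irrefl a h
    · exact Gᶜ.loopless.irrefl a h

/-- `w` lies on some shortest `u,v`-path (geodesic) of `H`. -/
def inInterval {V : Type*} (H : SimpleGraph V) (u v w : V) : Prop :=
  ∃ p : H.Walk u v, p.IsPath ∧ p.length = H.dist u v ∧ w ∈ p.support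

/-- A set of vertices is geodesically convex. -/
def IsGeoConvex {V : Type*} (H : SimpleGraph V) (S : Set V) : Prop :=
  ∀ u ∈ S, ∀ v ∈ S, ∀ w, inInterval H u v w → w ∈ S

/-- The geodesic convex hull: the smallest convex set containing `S`. -/
def geoHull {V : Type*} (H : SimpleGraph V) (S : Set V) : Set V :=
  ⋂₀ {C | IsGeoConvex H C ∧ S ⊆ C}

/-- The convexity number: maximum cardinality of a proper convex set. -/
noncomputable def convexityNumber {V : Type*} (H : SimpleGraph V) : ℕ :=
  sSup {n | ∃ S : Set V, IsGeoConvex H S ∧ S ≠ Set.univ ∧ S.ncard = n}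

/-- The diameter of a graph. -/
noncomputable def graphDiam {V : Type*} (H : SimpleGraph V) : ℕ :=
  sSup {d | ∃ u v : V, H.dist u v = d}

/-- The eccentricity of a vertex. -/
noncomputable def graphEcc {V : Type*} (H : SimpleGraph V) (u : V) : ℕ :=
  sSup {d | ∃ v : V, H.dist u v = d}

/-- The degree of a vertex. -/
noncomputable def vdeg {V : Type*} (H : SimpleGraph V) (v : V) : ℕ :=
  (H.neighborSet v).ncard

/-- The maximum degree. -/
noncomputable def maxDeg {V : Type*} (H : SimpleGraph V) : ℕ :=
  sSup {d | ∃ v : V, vdeg H v = d}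

/-- The number of pendant neighbours of a vertex. -/
noncomputable def pendCount {V : Type*} (H : SimpleGraph V) (w : V) : ℕ :=
  {v ∈ H.neighborSet w | vdeg H v = 1}.ncard

/-!
In the complementary prism the distance between two vertices of the copy of `T` is
`min (d_T x y) 3`, so the copies `ū, v̄` of a pair of `M` at `T`-distance at least `3` lie in
`S`, and then so does `m̄` for every `m ∈ M`, as `m` is at distance at least `2` from `u` or
from `v`. If two distinct vertices of `M` are at `T`-distance at most `3`, a `T`-geodesic between
them lies in `M`, so `M` contains an edge `ab`. Convexity in `T̄` puts `w̄` into `S` for every `w`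
adjacent to neither `a` nor `b`, which gives every vertex of `M` a neighbour in `M`; in particular
`u` and `v` have neighbours `u₁, v₁ ∈ M`. Running the same argument with the edges `uu₁` and
`vv₁`, which are far apart, puts every `w̄` into `S` (a `w` close to both edges is a common
neighbour of `u₁` and `v₁`, hence in `M`). The matching edges then spread `S` along `T`, so
`S` is everything.
-/

open Sum

namespace IsGeoConvex

variable {W : Type*} {H : SimpleGraph W} {S : Set W}

lemma mem_of_mem_support (hS : IsGeoConvex H S) {A B w : W} (hA : A ∈ S) (hB : B ∈ S)
    (p : H.Walk A B) (hp : p.length = H.dist A B) (hw : w ∈ p.support) : w ∈ S :=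
  hS A hA B hB w ⟨p, p.isPath_of_length_eq_dist hp, hp, hw⟩

lemma mem_of_adj_of_adj (hS : IsGeoConvex H S) {A B w : W} (hA : A ∈ S) (hB : B ∈ S)
    (hne : A ≠ B) (hnadj : ¬H.Adj A B) (h₁ : H.Adj A w) (h₂ : H.Adj w B) : w ∈ S := by
  let p : H.Walk A B := .cons h₁ (.cons h₂ .nil)
  have hlt := Reachable.one_lt_dist_of_ne_of_not_adj ⟨p⟩ hne hnadj
  have hle : H.dist A B ≤ 2 := SimpleGraph.dist_le p
  exact hS.mem_of_mem_support hA hB p (by simp [p]; omega) (by simp [p])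

end IsGeoConvex

section

variable {V : Type*} {G : SimpleGraph V}

@[simp] lemma compPrism_adj_inl_inl {a b : V} : (compPrism G).Adj (inl a) (inl b) ↔ G.Adj a b :=
  Iff.rfl
@[simp] lemma compPrism_adj_inr_inr {a b : V} : (compPrism G).Adj (inr a) (inr b) ↔ Gᶜ.Adj a b :=
  Iff.rfl
@[simp] lemma compPrism_adj_inl_inr {a b : V} : (compPrism G).Adj (inl a) (inr b) ↔ a = b :=
  Iff.rfl
@[simp] lemma compPrism_adj_inr_inl {a b : V} : (compPrism G).Adj (inr a) (inl b) ↔ a = b :=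
  Iff.rfl

@[simps] def compPrism.inlHom (G : SimpleGraph V) : G →g compPrism G := ⟨inl, id⟩

lemma min_dist_le_length_compPrism {x y : V} (p : (compPrism G).Walk (inl x) (inl y)) :
    min (G.dist x y) 3 ≤ p.length := by
  match p with
  | .nil => simp
  | .cons h .nil =>
    rw [compPrism_adj_inl_inl, ← dist_eq_one_iff_adj] at h
    simp [h]
  | .cons (v := inl c) h₁ (.cons h₂ .nil) =>
    simp only [compPrism_adj_inl_inl] at h₁ h₂
    have := SimpleGraph.dist_le (h₁.toWalk.append h₂.toWalk)
    simp at this ⊢; omega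
  | .cons (v := inr c) h₁ (.cons h₂ .nil) =>
    simp only [compPrism_adj_inl_inr, compPrism_adj_inr_inl] at h₁ h₂
    subst h₁ h₂; simp
  | .cons _ (.cons _ (.cons _ _)) => simp

lemma SimpleGraph.compl_adj_of_two_le_dist {a b : V} (h : 2 ≤ G.dist a b) : Gᶜ.Adj a b := by
  refine ⟨fun hab => ?_, fun hab => ?_⟩
  · simp [hab] at h
  · simp [dist_eq_one_iff_adj.mpr hab] at h

def compPrism.walkThroughCompl {x y : V} (h : Gᶜ.Adj x y) : (compPrism G).Walk (inl x) (inl y) :=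
  .cons (compPrism_adj_inl_inr.mpr rfl)
    (.cons (compPrism_adj_inr_inr.mpr h) (.cons (compPrism_adj_inr_inl.mpr rfl) .nil))

lemma dist_compPrism_inl (hG : G.Connected) (x y : V) :
    (compPrism G).dist (inl x) (inl y) = min (G.dist x y) 3 := by
  obtain ⟨p, hp⟩ := hG.exists_walk_length_eq_dist x y
  have hreach : (compPrism G).Reachable (inl x) (inl y) := ⟨p.map (compPrism.inlHom G)⟩
  obtain ⟨q, hq⟩ := hreach.exists_walk_length_eq_dist
  refine le_antisymm ?_ (hq ▸ min_dist_le_length_compPrism q)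
  have hle : (compPrism G).dist (inl x) (inl y) ≤ G.dist x y := by
    simpa [hp] using SimpleGraph.dist_le (p.map (compPrism.inlHom G))
  rcases le_or_gt (G.dist x y) 2 with h | h
  · omega
  · have := SimpleGraph.dist_le (compPrism.walkThroughCompl (compl_adj_of_two_le_dist h.le))
    simp [compPrism.walkThroughCompl] at this
    omega


namespace IsGeoConvex

variable {S : Set (V ⊕ V)}

lemma inl_mem_of_mem_support (hG : G.Connected) (hS : IsGeoConvex (compPrism G) S) {x y w : V}
    (hx : inl x ∈ S) (hy : inl y ∈ S) (hxy : G.dist x y ≤ 3) (p : G.Walk x y)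
    (hp : p.length = G.dist x y) (hw : w ∈ p.support) : inl w ∈ S :=
  hS.mem_of_mem_support (A := compPrism.inlHom G x) (B := compPrism.inlHom G y) hx hy
    (p.map (compPrism.inlHom G))
    (by rw [Walk.length_map, hp]; simp [dist_compPrism_inl hG, hxy])
    (by rw [Walk.support_map]; exact List.mem_map_of_mem hw)

lemma inr_mem_of_three_le_dist (hG : G.Connected) (hS : IsGeoConvex (compPrism G) S) {x y : V}
    (hx : inl x ∈ S) (hy : inl y ∈ S) (hxy : 3 ≤ G.dist x y) : inr x ∈ S ∧ inr y ∈ S := by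
  have hxy' : Gᶜ.Adj x y := compl_adj_of_two_le_dist (by omega)
  let p := compPrism.walkThroughCompl hxy'
  have hp : p.length = (compPrism G).dist (inl x) (inl y) := by
    simp [p, compPrism.walkThroughCompl, dist_compPrism_inl hG, hxy]
  exact ⟨hS.mem_of_mem_support hx hy p hp (by simp [p, compPrism.walkThroughCompl]),
    hS.mem_of_mem_support hx hy p hp (by simp [p, compPrism.walkThroughCompl])⟩

lemma inl_mem_of_inr_mem_of_adj (hS : IsGeoConvex (compPrism G) S) {c m : V}
    (hc : inr c ∈ S) (hm : inl m ∈ S) (hcm : G.Adj c m) : inl c ∈ S :=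
  hS.mem_of_adj_of_adj hc hm inr_ne_inl (by simpa using hcm.ne) (by simp) (by simpa using hcm)

lemma inr_mem_of_inr_mem_of_compl_adj (hS : IsGeoConvex (compPrism G) S) {c m : V}
    (hc : inr c ∈ S) (hm : inl m ∈ S) (hcm : Gᶜ.Adj c m) : inr m ∈ S :=
  hS.mem_of_adj_of_adj hc hm inr_ne_inl (by simpa using hcm.ne) (by simpa using hcm) (by simp)

lemma inr_mem_of_compl_adj_of_compl_adj (hS : IsGeoConvex (compPrism G) S) {c d w : V}
    (hc : inr c ∈ S) (hd : inr d ∈ S) (hcd : G.Adj c d) (hcw : Gᶜ.Adj c w) (hwd : Gᶜ.Adj w d) :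
    inr w ∈ S :=
  hS.mem_of_adj_of_adj hc hd (by simpa using hcd.ne) (by simp [hcd]) (by simpa using hcw)
    (by simpa using hwd)

lemma inr_mem_of_inl_mem (hG : G.Connected) (hS : IsGeoConvex (compPrism G) S) {u v m : V}
    (hu : inl u ∈ S) (hv : inl v ∈ S) (huv : 3 < G.dist u v) (hm : inl m ∈ S) : inr m ∈ S := by
  obtain ⟨hru, hrv⟩ := hS.inr_mem_of_three_le_dist hG hu hv huv.le
  have := hG.dist_triangle (u := u) (v := m) (w := v)
  rcases le_or_gt 2 (G.dist u m) with h | h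
  · exact hS.inr_mem_of_inr_mem_of_compl_adj hru hm (compl_adj_of_two_le_dist h)
  · refine hS.inr_mem_of_inr_mem_of_compl_adj hrv hm (compl_adj_of_two_le_dist ?_)
    rw [SimpleGraph.dist_comm]
    omega

lemma exists_adj_inl_mem (hG : G.Connected) (hS : IsGeoConvex (compPrism G) S) {x y : V}
    (hx : inl x ∈ S) (hy : inl y ∈ S) (hne : x ≠ y) (hxy : G.dist x y ≤ 3) :
    ∃ s, G.Adj y s ∧ inl s ∈ S := by
  obtain ⟨p, hp⟩ := hG.exists_walk_length_eq_dist y x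
  rw [SimpleGraph.dist_comm] at hxy
  cases p with
  | nil => exact absurd rfl hne
  | cons hys q => exact ⟨_, hys, hS.inl_mem_of_mem_support hG hy hx hxy _ hp (by simp)⟩

lemma exists_adj_inl_mem_of_adj (hG : G.Connected) (hS : IsGeoConvex (compPrism G) S) {a b z : V}
    (hab : G.Adj a b) (ha : inl a ∈ S) (hb : inl b ∈ S) (hra : inr a ∈ S) (hrb : inr b ∈ S)
    (hz : inl z ∈ S) : ∃ s, G.Adj z s ∧ inl s ∈ S := by
  rcases le_or_gt (G.dist a z) 3 with h | h
  · by_cases haz : a = z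
    · exact ⟨b, haz ▸ hab, hb⟩
    · exact hS.exists_adj_inl_mem hG ha hz haz h
  have hza : z ≠ a := by rintro rfl; simp at h
  obtain ⟨s, hzs⟩ := (hG z a).nonempty_neighborSet_left hza
  have hab' := dist_eq_one_iff_adj.mpr hab
  have hzs' := dist_eq_one_iff_adj.mpr hzs.symm
  have := hG.dist_triangle (u := a) (v := s) (w := z)
  have := hG.dist_triangle (u := a) (v := b) (w := s)
  have has : Gᶜ.Adj a s := compl_adj_of_two_le_dist (by omega)
  have hsb : Gᶜ.Adj s b := compl_adj_of_two_le_dist (by rw [SimpleGraph.dist_comm]; omega)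
  have hrs := hS.inr_mem_of_compl_adj_of_compl_adj hra hrb hab has hsb
  exact ⟨s, hzs, hS.inl_mem_of_inr_mem_of_adj hrs hz hzs.symm⟩

lemma inr_mem_of_far_adj_pairs (hG : G.Connected) (hS : IsGeoConvex (compPrism G) S)
    {u v u₁ v₁ : V} (hu : inl u ∈ S) (hv : inl v ∈ S) (huv : 3 < G.dist u v)
    (huu₁ : G.Adj u u₁) (hu₁ : inl u₁ ∈ S) (hvv₁ : G.Adj v v₁) (hv₁ : inl v₁ ∈ S) (w : V) :
    inr w ∈ S := by
  have inr_mem {m : V} (hm : inl m ∈ S) : inr m ∈ S := hS.inr_mem_of_inl_mem hG hu hv huv hm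
  by_cases hwu : 2 ≤ G.dist u w ∧ 2 ≤ G.dist w u₁
  · exact hS.inr_mem_of_compl_adj_of_compl_adj (inr_mem hu) (inr_mem hu₁) huu₁
      (compl_adj_of_two_le_dist hwu.1) (compl_adj_of_two_le_dist hwu.2)
  by_cases hwv : 2 ≤ G.dist v w ∧ 2 ≤ G.dist w v₁
  · exact hS.inr_mem_of_compl_adj_of_compl_adj (inr_mem hv) (inr_mem hv₁) hvv₁
      (compl_adj_of_two_le_dist hwv.1) (compl_adj_of_two_le_dist hwv.2)
  -- `w` is within distance `1` of both edges, hence a common neighbour of `u₁` and `v₁`.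
  rw [not_and_or, not_le, not_le] at hwu hwv
  have huu₁' := dist_eq_one_iff_adj.mpr huu₁
  have hvv₁' := dist_eq_one_iff_adj.mpr hvv₁
  have := hG.dist_triangle (u := u) (v := w) (w := v)
  have := hG.dist_triangle (u := u) (v := u₁) (w := w)
  have := hG.dist_triangle (u := v) (v := v₁) (w := w)
  have := hG.dist_triangle (u := u) (v := u₁) (w := v)
  have := hG.dist_triangle (u := u₁) (v := v₁) (w := v)
  have := hG.dist_triangle (u := u₁) (v := w) (w := v₁)
  rw [SimpleGraph.dist_comm (u := w) (v := v), SimpleGraph.dist_comm (u := u₁) (v := w),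
    SimpleGraph.dist_comm (u := v₁) (v := w), SimpleGraph.dist_comm (u := v₁) (v := v)] at *
  have hwu₁ : G.Adj w u₁ := dist_eq_one_iff_adj.mp (by omega)
  have hwv₁ : G.Adj w v₁ := dist_eq_one_iff_adj.mp (by omega)
  have hu₁v₁ : Gᶜ.Adj u₁ v₁ := compl_adj_of_two_le_dist (by omega)
  exact inr_mem (hS.mem_of_adj_of_adj hu₁ hv₁ (by simpa using hu₁v₁.ne) (by simpa using hu₁v₁.2)
    (by simpa using hwu₁.symm) (by simpa using hwv₁))

lemma eq_univ_of_forall_inr_mem (hG : G.Preconnected) (hS : IsGeoConvex (compPrism G) S)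
    (hr : ∀ w, inr w ∈ S) {a : V} (ha : inl a ∈ S) : S = Set.univ := by
  have propagate {c d : V} (p : G.Walk c d) : inl c ∈ S → inl d ∈ S := by
    induction p with
    | nil => exact id
    | cons hcd _ ih => exact fun hc => ih (hS.inl_mem_of_inr_mem_of_adj (hr _) hc hcd.symm)
  refine Set.eq_univ_of_forall ?_
  rintro (c | c)
  · exact propagate (hG a c).some ha
  · exact hr c

end IsGeoConvex

end

theorem stmt15_general {V : Type*} (T : SimpleGraph V) (hT : T.IsTree)
    (S : Set (V ⊕ V))
    (hS : IsGeoConvex (compPrism T) S) (hSp : S ≠ Set.univ)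
    (u v : V) (hu : Sum.inl u ∈ S) (hv : Sum.inl v ∈ S) (huv : 3 < T.dist u v) :
    ∀ x y : V, Sum.inl x ∈ S → Sum.inl y ∈ S → x ≠ y → 3 < T.dist x y := by
  intro x y hx hy hxy
  by_contra! hle
  have hG := hT.connected
  have inr_mem {m : V} (hm : inl m ∈ S) : inr m ∈ S := hS.inr_mem_of_inl_mem hG hu hv huv hm
  obtain ⟨s, hys, hs⟩ := hS.exists_adj_inl_mem hG hx hy hxy hle
  obtain ⟨u₁, huu₁, hu₁⟩ := hS.exists_adj_inl_mem_of_adj hG hys hy hs (inr_mem hy) (inr_mem hs) hu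
  obtain ⟨v₁, hvv₁, hv₁⟩ := hS.exists_adj_inl_mem_of_adj hG hys hy hs (inr_mem hy) (inr_mem hs) hv
  exact hSp (hS.eq_univ_of_forall_inr_mem hG.preconnected
    (hS.inr_mem_of_far_adj_pairs hG hu hv huv huu₁ hu₁ hvv₁ hv₁) hu)

theorem stmt15 {V : Type*} [Fintype V] (T : SimpleGraph V) (hT : T.IsTree)
    (hd : 5 ≤ graphDiam T) (S : Set (V ⊕ V))
    (hS : IsGeoConvex (compPrism T) S) (hSp : S ≠ Set.univ)
    (u v : V) (hu : Sum.inl u ∈ S) (hv : Sum.inl v ∈ S) (huv : 3 < T.dist u v) :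
    ∀ x y : V, Sum.inl x ∈ S → Sum.inl y ∈ S → x ≠ y → 3 < T.dist x y :=
  stmt15_general T hT S hS hSp u v hu hv huv
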